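/- arXiv:1903.07083 — 5 statements merged into one kernel-verified Lean document; each statement's English description precedes it below -/
import Mathlib

section
/- For every integer d ≥ 3 and every prime power q, the sum over i from 1 to ⌈d/2⌉ - 1 of the reciprocals of the Gaussian binomial coefficients binom(d,i)_q is strictly less than q^{-(d-1)}. -/
/-!
Each factor `(q^(d-i+j) - 1) / (q^j - 1)` of `binom(d,i)_q` is at least `q^(d-i)`, and the one
with `j = 1` is at least `(1 + 1/q) q^(d-i)`, so `binom(d,i)_q ≥ (1 + 1/q) q^(i(d-i))`.
For `2i < d` we have `i(d-i) ≥ d + 2i - 3`, so the sum is dominated by a geometric series of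
ratio `q⁻²` with total `q^(-(d-1)) · q³ / ((q+1)(q²-1))`, and `q³ < (q+1)(q²-1)` for `q ≥ 2`.
-/

/-- The Gaussian binomial coefficient `binom(d,i)_q` as a real number. -/
noncomputable def gbinom (q d i : ℕ) : ℝ :=
  (∏ j ∈ Finset.Icc (d - i + 1) d, ((q : ℝ) ^ j - 1)) /
    (∏ j ∈ Finset.Icc 1 i, ((q : ℝ) ^ j - 1))

open Finset

section PowerBounds

variable {R : Type*} [CommRing R] [LinearOrder R] [IsStrictOrderedRing R] {x : R}

lemma pow_mul_pow_sub_one_le (hx : 1 ≤ x) (a j : ℕ) : x ^ a * (x ^ j - 1) ≤ x ^ (a + j) - 1 := by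
  rw [pow_add]
  nlinarith [one_le_pow₀ (n := a) hx]

lemma add_one_mul_pow_mul_sub_one_le (hx : 1 ≤ x) {a : ℕ} (ha : 1 ≤ a) :
    (x + 1) * x ^ a * (x - 1) ≤ x * (x ^ (a + 1) - 1) := by
  have : x ≤ x ^ a := le_self_pow₀ hx (by omega)
  rw [pow_succ]
  nlinarith

end PowerBounds

lemma gbinom_eq_prod (q : ℕ) {d i : ℕ} (hi : i ≤ d) :
    gbinom q d i = ∏ j ∈ Icc 1 i, ((q : ℝ) ^ (d - i + j) - 1) / ((q : ℝ) ^ j - 1) := by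
  rw [gbinom, prod_div_distrib]
  congr 1
  conv_lhs => rw [show d = d - i + i by omega, Nat.add_sub_cancel, ← map_add_left_Icc, prod_map]
  rfl

lemma add_one_mul_pow_le_mul_gbinom {q d i : ℕ} (hq : 2 ≤ q) (hi : 1 ≤ i) (hid : i < d) :
    ((q : ℝ) + 1) * (q : ℝ) ^ ((d - i) * i) ≤ q * gbinom q d i := by
  have hq1 : (1 : ℝ) < q := by exact_mod_cast hq
  have hden : ∀ j, 1 ≤ j → (0 : ℝ) < (q : ℝ) ^ j - 1 := fun j hj =>
    sub_pos.2 (one_lt_pow₀ hq1 (by omega))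
  have hfactor : ∀ j ∈ Ioc 1 i,
      (q : ℝ) ^ (d - i) ≤ ((q : ℝ) ^ (d - i + j) - 1) / ((q : ℝ) ^ j - 1) := fun j hj =>
    (le_div_iff₀ (hden j (mem_Ioc.1 hj).1.le)).2 (pow_mul_pow_sub_one_le hq1.le _ _)
  have hhead : ((q : ℝ) + 1) * (q : ℝ) ^ (d - i) ≤
      q * (((q : ℝ) ^ (d - i + 1) - 1) / ((q : ℝ) ^ 1 - 1)) := by
    rw [pow_one, mul_div_assoc', le_div_iff₀ (by linarith)]
    exact add_one_mul_pow_mul_sub_one_le hq1.le (by omega)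
  have htail : ((q : ℝ) ^ (d - i)) ^ (i - 1) ≤
      ∏ j ∈ Ioc 1 i, ((q : ℝ) ^ (d - i + j) - 1) / ((q : ℝ) ^ j - 1) := by
    simpa using prod_le_prod (fun _ _ => by positivity) hfactor
  rw [gbinom_eq_prod q hid.le, Icc_eq_cons_Ioc hi, prod_cons, ← mul_assoc]
  calc ((q : ℝ) + 1) * (q : ℝ) ^ ((d - i) * i)
      = ((q : ℝ) + 1) * (q : ℝ) ^ (d - i) * ((q : ℝ) ^ (d - i)) ^ (i - 1) := by
        rw [mul_assoc, ← pow_succ', ← pow_mul, Nat.sub_add_cancel hi]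
    _ ≤ _ := mul_le_mul hhead htail (by positivity) ((by positivity : (0 : ℝ) ≤ _).trans hhead)

lemma inv_gbinom_le {q d i : ℕ} (hq : 2 ≤ q) (hi : 1 ≤ i) (hid : 2 * i + 1 ≤ d) :
    (gbinom q d i)⁻¹ ≤ (q : ℝ) ^ 4 / (((q : ℝ) + 1) * (q : ℝ) ^ d) * ((q : ℝ) ^ 2)⁻¹ ^ i := by
  have hq1 : (1 : ℝ) ≤ q := by exact_mod_cast (by omega : 1 ≤ q)
  have hexp : d + 2 * i ≤ (d - i) * i + 3 := by
    -- equivalent to `(d - i - 3) * (i - 1) ≥ 0`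
    obtain ⟨a, rfl⟩ : ∃ a, d = a + i := ⟨d - i, by omega⟩
    rw [Nat.add_sub_cancel]
    rcases Nat.lt_or_ge i 2 with h | h
    · interval_cases i; omega
    · nlinarith
  have hlower := add_one_mul_pow_le_mul_gbinom (d := d) hq hi (by omega)
  have hpow : (q : ℝ) ^ (d + 2 * i) ≤ (q : ℝ) ^ 3 * (q : ℝ) ^ ((d - i) * i) := by
    rw [← pow_add, add_comm 3]
    exact pow_le_pow_right₀ hq1 hexp
  have key : ((q : ℝ) + 1) * (q : ℝ) ^ (d + 2 * i) ≤ (q : ℝ) ^ 4 * gbinom q d i := by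
    calc ((q : ℝ) + 1) * (q : ℝ) ^ (d + 2 * i)
        ≤ (q : ℝ) ^ 3 * (((q : ℝ) + 1) * (q : ℝ) ^ ((d - i) * i)) := by nlinarith
      _ ≤ (q : ℝ) ^ 3 * (q * gbinom q d i) := by gcongr
      _ = (q : ℝ) ^ 4 * gbinom q d i := by ring
  calc (gbinom q d i)⁻¹ ≤ (((q : ℝ) + 1) * (q : ℝ) ^ (d + 2 * i) / (q : ℝ) ^ 4)⁻¹ :=
        inv_anti₀ (by positivity) ((div_le_iff₀' (by positivity)).2 key)
    _ = (q : ℝ) ^ 4 / (((q : ℝ) + 1) * (q : ℝ) ^ d) * ((q : ℝ) ^ 2)⁻¹ ^ i := by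
        rw [inv_div, pow_add, pow_mul, inv_pow]
        field_simp

lemma pow_four_div_mul_geom_lt {x : ℝ} (hx : 2 ≤ x) (d : ℕ) :
    x ^ 4 / ((x + 1) * x ^ d) * ((x ^ 2)⁻¹ ^ 1 / (1 - (x ^ 2)⁻¹)) < x ^ (-(d : ℤ) + 1) := by
  rw [zpow_add₀ (by positivity), zpow_neg, zpow_natCast, zpow_one]
  have hx2 : 1 < x ^ 2 := by nlinarith
  have hmain : x ^ 4 / ((x + 1) * (x ^ 2 - 1)) < x := by
    rw [div_lt_iff₀ (by nlinarith)]
    nlinarith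
  calc x ^ 4 / ((x + 1) * x ^ d) * ((x ^ 2)⁻¹ ^ 1 / (1 - (x ^ 2)⁻¹))
      = (x ^ d)⁻¹ * (x ^ 4 / ((x + 1) * (x ^ 2 - 1))) := by
        have : x ^ 2 - 1 ≠ 0 := by linarith
        field_simp
    _ < (x ^ d)⁻¹ * x := by gcongr

theorem sum_gbinom_inv_lt_general (q d : ℕ) (hq : IsPrimePow q) :
    ∑ i ∈ Finset.Icc 1 ((d + 1) / 2 - 1), (gbinom q d i)⁻¹ < (q : ℝ) ^ (-(d : ℤ) + 1) := by
  have hq2 := hq.two_le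
  set r : ℝ := ((q : ℝ) ^ 2)⁻¹
  have hr1 : r < 1 := inv_lt_one_of_one_lt₀ (one_lt_pow₀ (by exact_mod_cast hq2) two_ne_zero)
  calc ∑ i ∈ Icc 1 ((d + 1) / 2 - 1), (gbinom q d i)⁻¹
      ≤ ∑ i ∈ Icc 1 ((d + 1) / 2 - 1), (q : ℝ) ^ 4 / (((q : ℝ) + 1) * (q : ℝ) ^ d) * r ^ i :=
        sum_le_sum fun i hi => inv_gbinom_le hq2 (mem_Icc.1 hi).1 (by grind)
    _ = (q : ℝ) ^ 4 / (((q : ℝ) + 1) * (q : ℝ) ^ d) *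
          ∑ i ∈ Ico 1 ((d + 1) / 2 - 1 + 1), r ^ i := by
        rw [mul_sum, Ico_add_one_right_eq_Icc]
    _ ≤ (q : ℝ) ^ 4 / (((q : ℝ) + 1) * (q : ℝ) ^ d) * (r ^ 1 / (1 - r)) := by
        gcongr; exact geom_sum_Ico_le_of_lt_one (by positivity) hr1
    _ < (q : ℝ) ^ (-(d : ℤ) + 1) := pow_four_div_mul_geom_lt (by exact_mod_cast hq2) d

/-- For `d ≥ 3` and a prime power `q`,
`∑_{i=1}^{⌈d/2⌉-1} binom(d,i)_q⁻¹ < q^{-(d-1)}`. -/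
theorem sum_gbinom_inv_lt (q d : ℕ) (hq : IsPrimePow q) (hd : 3 ≤ d) :
    ∑ i ∈ Finset.Icc 1 ((d + 1) / 2 - 1), (gbinom q d i)⁻¹ < (q : ℝ) ^ (-(d : ℤ) + 1) :=
  sum_gbinom_inv_lt_general q d hq
end

section
/- For integers d ≥ 3, 2 < i ≤ ⌈d/2⌉ - 1, and any prime power q, the Gaussian binomial coefficient satisfies binom(d,2)_q < binom(d,i)_q. -/
section

variable {q : ℕ}

lemma pow_sub_one_pos (hq : 1 < q) {j : ℕ} (hj : j ≠ 0) : 0 < (q : ℝ) ^ j - 1 :=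
  sub_pos.2 (one_lt_pow₀ (by exact_mod_cast hq) hj)

lemma prod_Icc_pow_sub_one_pos (hq : 1 < q) {a : ℕ} (ha : 1 ≤ a) (b : ℕ) :
    0 < ∏ j ∈ Finset.Icc a b, ((q : ℝ) ^ j - 1) :=
  Finset.prod_pos fun j hj => pow_sub_one_pos hq (by grind)

lemma gbinom_pos (hq : 1 < q) (d i : ℕ) : 0 < gbinom q d i :=
  div_pos (prod_Icc_pow_sub_one_pos hq (by omega) d) (prod_Icc_pow_sub_one_pos hq le_rfl i)

lemma gbinom_succ (hq : 1 < q) {d k : ℕ} (hk : k < d) :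
    gbinom q d (k + 1) =
      gbinom q d k * (((q : ℝ) ^ (d - k) - 1) / ((q : ℝ) ^ (k + 1) - 1)) := by
  have hnum : Finset.Icc (d - (k + 1) + 1) d = insert (d - k) (Finset.Icc (d - k + 1) d) := by
    rw [Finset.insert_Icc_add_one_left_eq_Icc (by omega)]
    congr 1
    omega
  have hden : Finset.Icc 1 (k + 1) = insert (k + 1) (Finset.Icc 1 k) :=
    (Finset.insert_Icc_right_eq_Icc_add_one (by omega)).symm
  have hden_ne := (prod_Icc_pow_sub_one_pos hq le_rfl k).ne'
  have hlast_ne := (pow_sub_one_pos hq k.succ_ne_zero).ne'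
  unfold gbinom
  rw [hnum, hden, Finset.prod_insert (by simp), Finset.prod_insert (by simp)]
  field_simp

lemma gbinom_lt_gbinom_succ (hq : 1 < q) {d k : ℕ} (hk : 2 * k + 1 < d) :
    gbinom q d k < gbinom q d (k + 1) := by
  have hratio : 1 < ((q : ℝ) ^ (d - k) - 1) / ((q : ℝ) ^ (k + 1) - 1) := by
    rw [one_lt_div (pow_sub_one_pos hq k.succ_ne_zero), sub_lt_sub_iff_right]
    exact pow_lt_pow_right₀ (by exact_mod_cast hq) (by omega)
  rw [gbinom_succ hq (by omega)]
  exact lt_mul_of_one_lt_right (gbinom_pos hq d k) hratio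

lemma strictMonoOn_gbinom (hq : 1 < q) (d : ℕ) :
    StrictMonoOn (gbinom q d) (Set.Iic (d / 2)) :=
  strictMonoOn_of_lt_add_one Set.ordConnected_Iic fun k _ _ hk =>
    gbinom_lt_gbinom_succ hq (by simp only [Set.mem_Iic] at hk; omega)

end

theorem gbinom_two_lt_general (q d i : ℕ) (hq : IsPrimePow q)
    (hi : 2 < i) (hi' : i ≤ (d + 1) / 2 - 1) :
    gbinom q d 2 < gbinom q d i :=
  strictMonoOn_gbinom hq.one_lt d (by simp only [Set.mem_Iic]; omega)
    (by simp only [Set.mem_Iic]; omega) hi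

/-- For `d ≥ 3`, `2 < i ≤ ⌈d/2⌉ - 1` and a prime power `q`,
`binom(d,2)_q < binom(d,i)_q`. -/
theorem gbinom_two_lt (q d i : ℕ) (hq : IsPrimePow q) (hd : 3 ≤ d)
    (hi : 2 < i) (hi' : i ≤ (d + 1) / 2 - 1) :
    gbinom q d 2 < gbinom q d i :=
  gbinom_two_lt_general q d i hq hi hi'
end

section
/- An element g ∈ GL(d,q) has an irreducible F_q⟨g⟩-submodule of dimension e in the natural module F_q^d if and only if the characteristic polynomial of g has an irreducible factor of degree e over F_q, provided e > d/2. -/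
/-!
Every vector `v` spans a cyclic subspace `{q(g) v : q ∈ F[X]}`. If `p` is irreducible and
`p(g) v = 0` with `v ≠ 0`, this subspace is `F[X]/(p)` as an `F[X]`-module, hence irreducible of
dimension `deg p`; conversely an irreducible invariant subspace is the cyclic subspace of any of
its nonzero vectors, and splitting the minimal polynomial into irreducible factors produces such a
vector killed by an irreducible `p ∣ minpoly ∣ charpoly`. For the other direction, an irreducible
factor `p` of the characteristic polynomial has the root of `p` in `F[X]/(p)` as an eigenvalue of
`g`, so `p(g)` is singular.
-/

open Polynomial Module Module.End

/-- A subspace is invariant under a matrix. -/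
def MatInvariant {F : Type} [Field F] {d : ℕ} (g : Matrix (Fin d) (Fin d) F)
    (U : Submodule F (Fin d → F)) : Prop :=
  U.map (Matrix.toLin' g) ≤ U

/-- A subspace is a nonzero irreducible `F_q⟨g⟩`-submodule. -/
def MatIrreducibleOn {F : Type} [Field F] {d : ℕ} (g : Matrix (Fin d) (Fin d) F)
    (U : Submodule F (Fin d → F)) : Prop :=
  U ≠ ⊥ ∧ MatInvariant g U ∧ ∀ W ≤ U, MatInvariant g W → W = ⊥ ∨ W = U

namespace Module.End

variable {F V : Type*} [Field F] [AddCommGroup V] [Module F V] (f : End F V)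

noncomputable def aevalAt (v : V) : F[X] →ₗ[F] V :=
  LinearMap.applyₗ v ∘ₗ (aeval f).toLinearMap

@[simp]
lemma aevalAt_apply (v : V) (q : F[X]) : aevalAt f v q = aeval f q v := rfl

noncomputable def cyclicSubspace (v : V) : Submodule F V := LinearMap.range (aevalAt f v)

variable {f}

lemma mem_cyclicSubspace {v x : V} : x ∈ cyclicSubspace f v ↔ ∃ q : F[X], aeval f q v = x :=
  LinearMap.mem_range

lemma self_mem_cyclicSubspace (v : V) : v ∈ cyclicSubspace f v :=
  mem_cyclicSubspace.2 ⟨1, by simp⟩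

lemma aeval_apply_mem_cyclicSubspace (v : V) (q : F[X]) : aeval f q v ∈ cyclicSubspace f v :=
  mem_cyclicSubspace.2 ⟨q, rfl⟩

@[simp]
lemma cyclicSubspace_zero : cyclicSubspace f 0 = ⊥ := by
  ext x
  simp [mem_cyclicSubspace, eq_comm]

lemma cyclicSubspace_ne_bot {v : V} (hv : v ≠ 0) : cyclicSubspace f v ≠ ⊥ :=
  fun h ↦ hv (by simpa [h] using self_mem_cyclicSubspace (f := f) v)

lemma cyclicSubspace_mem_invtSubmodule (v : V) : cyclicSubspace f v ∈ f.invtSubmodule := by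
  rintro _ ⟨q, rfl⟩
  exact mem_cyclicSubspace.2 ⟨X * q, by simp⟩

lemma cyclicSubspace_le {U : Submodule F V} (hU : U ∈ f.invtSubmodule) {v : V} (hv : v ∈ U) :
    cyclicSubspace f v ≤ U := by
  rintro _ ⟨q, rfl⟩
  exact aeval_apply_smul_mem_of_le_comap hv q f hU

variable {p : F[X]} {v : V}

lemma mem_cyclicSubspace_aeval_apply (hp : Irreducible p) (hpv : aeval f p v = 0) {q : F[X]}
    (hq : ¬p ∣ q) : v ∈ cyclicSubspace f (aeval f q v) := by
  obtain ⟨a, b, hab⟩ := (hp.coprime_iff_not_dvd.2 hq)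
  refine mem_cyclicSubspace.2 ⟨b, ?_⟩
  -- `a p + b q = 1` and `p` kills `v`
  calc aeval f b (aeval f q v) = aeval f (a * p + b * q) v := by simp [hpv]
    _ = v := by simp [hab]

lemma ker_aevalAt (hp : Irreducible p) (hv : v ≠ 0) (hpv : aeval f p v = 0) :
    LinearMap.ker (aevalAt f v) = (Ideal.span {p}).restrictScalars F := by
  ext q
  rw [LinearMap.mem_ker, Submodule.restrictScalars_mem, Ideal.mem_span_singleton, aevalAt_apply]
  constructor
  · intro hq
    by_contra hpq
    simpa [hq, hv] using mem_cyclicSubspace_aeval_apply hp hpv hpq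
  · rintro ⟨c, rfl⟩
    simp [mul_comm p, hpv]

lemma finrank_cyclicSubspace (hp : Irreducible p) (hv : v ≠ 0) (hpv : aeval f p v = 0) :
    finrank F (cyclicSubspace f v) = p.natDegree := by
  rw [cyclicSubspace, ← (aevalAt f v).quotKerEquivRange.finrank_eq, ker_aevalAt hp hv hpv,
    (Submodule.Quotient.restrictScalarsEquiv F _).finrank_eq, finrank_quotient_span_eq_natDegree]

lemma eq_cyclicSubspace_of_le (hp : Irreducible p) (hpv : aeval f p v = 0)
    {W : Submodule F V} (hW : W ∈ f.invtSubmodule) (hle : W ≤ cyclicSubspace f v) (hW0 : W ≠ ⊥) :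
    W = cyclicSubspace f v := by
  obtain ⟨w, hwW, hw0⟩ := W.exists_mem_ne_zero_of_ne_bot hW0
  obtain ⟨q, rfl⟩ := mem_cyclicSubspace.1 (hle hwW)
  have hpq : ¬p ∣ q := by
    rintro ⟨c, rfl⟩
    simp [mul_comm p, hpv] at hw0
  exact hle.antisymm (cyclicSubspace_le hW (cyclicSubspace_le hW hwW
    (mem_cyclicSubspace_aeval_apply hp hpv hpq)))

lemma exists_irreducible_aeval_eq_zero {a : F[X]} (ha : a ≠ 0) (hv : v ≠ 0)
    (hav : aeval f a v = 0) :
    ∃ p, Irreducible p ∧ p ∣ a ∧ ∃ w ∈ cyclicSubspace f v, w ≠ 0 ∧ aeval f p w = 0 := by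
  induction a using WfDvdMonoid.induction_on_irreducible with
  | zero => exact absurd rfl ha
  | unit u hu =>
    obtain ⟨c, hc, rfl⟩ := Polynomial.isUnit_iff.1 hu
    exact absurd (by simpa [hc.ne_zero] using hav) hv
  | mul a i ha0 hi ih =>
    by_cases hav' : aeval f a v = 0
    · obtain ⟨p, hp, hpa, hw⟩ := ih ha0 hav'
      exact ⟨p, hp, hpa.mul_left i, hw⟩
    · refine ⟨i, hi, dvd_mul_right i a, aeval f a v, aeval_apply_mem_cyclicSubspace v a, hav', ?_⟩
      simpa [← Module.End.mul_apply] using hav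

end Module.End

namespace Matrix

variable {n F : Type*} [Fintype n] [DecidableEq n] [Field F]

lemma aeval_toLin' (M : Matrix n n F) (p : F[X]) : aeval (toLin' M) p = toLin' (aeval M p) :=
  aeval_algHom_apply toLinAlgEquiv' M p

lemma det_aeval_eq_zero_of_dvd_charpoly (M : Matrix n n F) {p : F[X]} (hp : Irreducible p)
    (hdvd : p ∣ M.charpoly) : (aeval M p).det = 0 := by
  have := Fact.mk hp
  let σ := algebraMap F (AdjoinRoot p)
  have hroot : (M.map σ).charpoly.IsRoot (AdjoinRoot.root p) := by
    rw [charpoly_map]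
    exact (AdjoinRoot.isRoot_root p).dvd (Polynomial.map_dvd σ hdvd)
  -- spectral mapping: `p(root p) = 0` lies in the spectrum of `p(M)` over `AdjoinRoot p`
  have hzero : (0 : AdjoinRoot p) ∈ spectrum (AdjoinRoot p) (aeval (M.map σ) (p.map σ)) := by
    have hp0 : (p.map σ).eval (AdjoinRoot.root p) = 0 := AdjoinRoot.isRoot_root p
    exact hp0 ▸ spectrum.subset_polynomial_aeval (M.map σ) (p.map σ)
      ⟨_, mem_spectrum_iff_isRoot_charpoly.2 hroot, rfl⟩
  have hmap : aeval (M.map σ) (p.map σ) = σ.mapMatrix (aeval M p) := by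
    rw [aeval_map_algebraMap]
    exact aeval_algHom_apply (Algebra.ofId F (AdjoinRoot p)).mapMatrix M p
  rw [spectrum.zero_mem_iff, hmap, isUnit_iff_isUnit_det, ← RingHom.map_det, isUnit_iff_ne_zero,
    not_not] at hzero
  exact (map_eq_zero σ).1 hzero

lemma exists_aeval_toLin'_apply_eq_zero_of_dvd_charpoly (M : Matrix n n F) {p : F[X]}
    (hp : Irreducible p) (hdvd : p ∣ M.charpoly) :
    ∃ v ≠ 0, aeval (toLin' M) p v = 0 := by
  obtain ⟨v, hv0, hv⟩ := exists_mulVec_eq_zero_iff.2 (det_aeval_eq_zero_of_dvd_charpoly M hp hdvd)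
  exact ⟨v, hv0, by rw [aeval_toLin', toLin'_apply, hv]⟩

end Matrix

section MatIrreducibleOn

variable {F : Type} [Field F] {d : ℕ} {M : Matrix (Fin d) (Fin d) F}

lemma matInvariant_iff {U : Submodule F (Fin d → F)} :
    MatInvariant M U ↔ U ∈ invtSubmodule (Matrix.toLin' M) :=
  (mem_invtSubmodule_iff_map_le _).symm

lemma matIrreducibleOn_cyclicSubspace {p : F[X]} (hp : Irreducible p) {v : Fin d → F}
    (hv : v ≠ 0) (hpv : aeval (Matrix.toLin' M) p v = 0) :
    MatIrreducibleOn M (cyclicSubspace (Matrix.toLin' M) v) := by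
  refine ⟨cyclicSubspace_ne_bot hv, matInvariant_iff.2 (cyclicSubspace_mem_invtSubmodule v),
    fun W hle hW ↦ ?_⟩
  rw [or_iff_not_imp_left]
  exact eq_cyclicSubspace_of_le hp hpv (matInvariant_iff.1 hW) hle

lemma MatIrreducibleOn.cyclicSubspace_eq {U : Submodule F (Fin d → F)}
    (hU : MatIrreducibleOn M U) {v : Fin d → F} (hvU : v ∈ U) (hv : v ≠ 0) :
    cyclicSubspace (Matrix.toLin' M) v = U := by
  have hle := cyclicSubspace_le (matInvariant_iff.1 hU.2.1) hvU
  exact (hU.2.2 _ hle (matInvariant_iff.2 (cyclicSubspace_mem_invtSubmodule v))).resolve_left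
    (cyclicSubspace_ne_bot hv)

end MatIrreducibleOn

theorem fat_iff_charpoly_factor_general (d e : ℕ)
    (F : Type) [Field F]
    (g : GL (Fin d) F) :
    (∃ U : Submodule F (Fin d → F),
        MatIrreducibleOn (g : Matrix (Fin d) (Fin d) F) U ∧ Module.finrank F U = e) ↔
      ∃ p : Polynomial F, Irreducible p ∧
        p ∣ (g : Matrix (Fin d) (Fin d) F).charpoly ∧ p.natDegree = e := by
  set f := Matrix.toLin' (g : Matrix (Fin d) (Fin d) F)
  have hminpoly : minpoly F f ∣ (g : Matrix (Fin d) (Fin d) F).charpoly :=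
    Matrix.charpoly_toLin' (g : Matrix (Fin d) (Fin d) F) ▸ LinearMap.minpoly_dvd_charpoly f
  constructor
  · rintro ⟨U, hU, rfl⟩
    obtain ⟨u, huU, hu0⟩ := U.exists_mem_ne_zero_of_ne_bot hU.1
    obtain ⟨p, hp, hpμ, w, hw, hw0, hpw⟩ := exists_irreducible_aeval_eq_zero
      (minpoly.ne_zero (LinearMap.isIntegral f)) hu0
      (by rw [minpoly.aeval, LinearMap.zero_apply])
    have hwU : w ∈ U := cyclicSubspace_le (matInvariant_iff.1 hU.2.1) huU hw
    refine ⟨p, hp, hpμ.trans hminpoly, ?_⟩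
    rw [← hU.cyclicSubspace_eq hwU hw0, finrank_cyclicSubspace hp hw0 hpw]
  · rintro ⟨p, hp, hdvd, rfl⟩
    obtain ⟨v, hv0, hpv⟩ := Matrix.exists_aeval_toLin'_apply_eq_zero_of_dvd_charpoly _ hp hdvd
    exact ⟨_, matIrreducibleOn_cyclicSubspace hp hv0 hpv, finrank_cyclicSubspace hp hv0 hpv⟩

/-- For `e > d/2`, `g ∈ GL(d,q)` has an irreducible `e`-dimensional invariant subspace of
`F_q^d` iff its characteristic polynomial has an irreducible factor of degree `e`. -/
theorem fat_iff_charpoly_factor (q d e : ℕ) (hq : IsPrimePow q) (he : d < 2 * e)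
    (F : Type) [Field F] [Fintype F] [DecidableEq F] (hF : Fintype.card F = q)
    (g : GL (Fin d) F) :
    (∃ U : Submodule F (Fin d → F),
        MatIrreducibleOn (g : Matrix (Fin d) (Fin d) F) U ∧ Module.finrank F U = e) ↔
      ∃ p : Polynomial F, Irreducible p ∧
        p ∣ (g : Matrix (Fin d) (Fin d) F).charpoly ∧ p.natDegree = e :=
  fat_iff_charpoly_factor_general d e F g
end

section
/- Let d/2 < e_1, e_2 < d and let (g_1, g_2) ∈ GL(d,q)^2 be a reducible fat(d,q;e_1,e_2)-pair with irreducible submodules U_1, U_2 of dimensions e_1, e_2 respectively, and let W be a nonzero proper F_q⟨g_1,g_2⟩-submodule of V. Then either W ∩ U_1 = W ∩ U_2 = {0} and 1 ≤ dim W ≤ d − max{e_1,e_2}, or U_1 + U_2 ⊆ W (indeed the F_q⟨g_1,g_2⟩-submodule generated by U_1, U_2 lies in W) and max{e_1,e_2} ≤ dim W ≤ d − 1. -/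
/-!
`W ⊓ Uᵢ` is `gᵢ`-invariant, so by irreducibility `W` either meets `Uᵢ` trivially or contains it.
If `W` contains `U₁`, then `dim W + dim U₂ ≥ e₁ + e₂ > d`, so `W` meets `U₂` nontrivially and
therefore contains it too; symmetrically for `U₂`. Hence `W` contains both or meets both
trivially, and the dimension bounds follow from `dim (W ⊕ Uᵢ) ≤ d` and `W ≠ ⊤`.
-/

open Module Submodule

section

variable {F : Type} [Field F] {d : ℕ} {g : Matrix (Fin d) (Fin d) F}
  {U W : Submodule F (Fin d → F)}

theorem MatInvariant.inf (hU : MatInvariant g U) (hW : MatInvariant g W) :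
    MatInvariant g (U ⊓ W) :=
  (map_inf_le _).trans (inf_le_inf hU hW)

theorem MatIrreducibleOn.inf_eq_bot_or_le (hU : MatIrreducibleOn g U)
    (hW : MatInvariant g W) : W ⊓ U = ⊥ ∨ U ≤ W :=
  (hU.2.2 _ inf_le_right (hW.inf hU.2.1)).imp_right fun h : W ⊓ U = U => h ▸ inf_le_left

theorem MatIrreducibleOn.finrank_add_le_of_not_le (hU : MatIrreducibleOn g U)
    (hW : MatInvariant g W) (hUW : ¬U ≤ W) : finrank F W + finrank F U ≤ d := by
  simpa using finrank_add_finrank_le_of_disjoint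
    (disjoint_iff.2 ((hU.inf_eq_bot_or_le hW).resolve_right hUW))

theorem MatIrreducibleOn.le_of_lt_finrank_add (hU : MatIrreducibleOn g U)
    (hW : MatInvariant g W) (h : d < finrank F W + finrank F U) : U ≤ W := by
  by_contra hUW
  exact (hU.finrank_add_le_of_not_le hW hUW).not_gt h

end

theorem cases_for_W_general (d e₁ e₂ : ℕ)
    (he₁ : d < 2 * e₁) (he₂ : d < 2 * e₂)
    (F : Type) [Field F]
    (g₁ g₂ : GL (Fin d) F) (U₁ U₂ W : Submodule F (Fin d → F))
    (hU₁ : MatIrreducibleOn (g₁ : Matrix (Fin d) (Fin d) F) U₁)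
    (hU₁e : Module.finrank F U₁ = e₁)
    (hU₂ : MatIrreducibleOn (g₂ : Matrix (Fin d) (Fin d) F) U₂)
    (hU₂e : Module.finrank F U₂ = e₂)
    (hWbot : W ≠ ⊥) (hWtop : W ≠ ⊤)
    (hW₁ : MatInvariant (g₁ : Matrix (Fin d) (Fin d) F) W)
    (hW₂ : MatInvariant (g₂ : Matrix (Fin d) (Fin d) F) W) :
    (W ⊓ U₁ = ⊥ ∧ W ⊓ U₂ = ⊥ ∧ 1 ≤ Module.finrank F W ∧
        Module.finrank F W ≤ d - max e₁ e₂) ∨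
      (U₁ ⊔ U₂ ≤ W ∧ max e₁ e₂ ≤ Module.finrank F W ∧ Module.finrank F W ≤ d - 1) := by
  have hWd : finrank F W < d := by simpa using finrank_lt hWtop
  have hW0 : 1 ≤ finrank F W := Nat.one_le_iff_ne_zero.2 (mt finrank_eq_zero.1 hWbot)
  have h₁₂ (h : U₁ ≤ W) : U₂ ≤ W :=
    hU₂.le_of_lt_finrank_add hW₂ (by have := finrank_mono h; omega)
  have h₂₁ (h : U₂ ≤ W) : U₁ ≤ W :=
    hU₁.le_of_lt_finrank_add hW₁ (by have := finrank_mono h; omega)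
  by_cases h₁ : U₁ ≤ W
  · have h₂ := h₁₂ h₁
    have := finrank_mono h₁
    have := finrank_mono h₂
    exact Or.inr ⟨sup_le h₁ h₂, by omega, by omega⟩
  · have h₂ : ¬U₂ ≤ W := mt h₂₁ h₁
    have := hU₁.finrank_add_le_of_not_le hW₁ h₁
    have := hU₂.finrank_add_le_of_not_le hW₂ h₂
    exact Or.inl ⟨(hU₁.inf_eq_bot_or_le hW₁).resolve_right h₁,
      (hU₂.inf_eq_bot_or_le hW₂).resolve_right h₂, hW0, by omega⟩

/-- Dichotomy for an invariant subspace `W` with respect to a reducible fat pair: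
either `W` intersects both `U₁, U₂` trivially and `1 ≤ dim W ≤ d - max{e₁,e₂}`,
or `U₁ + U₂ ⊆ W` and `max{e₁,e₂} ≤ dim W ≤ d - 1`. -/
theorem cases_for_W (q d e₁ e₂ : ℕ) (hq : IsPrimePow q)
    (he₁ : d < 2 * e₁) (he₁' : e₁ < d) (he₂ : d < 2 * e₂) (he₂' : e₂ < d)
    (F : Type) [Field F] [Fintype F] [DecidableEq F] (hF : Fintype.card F = q)
    (g₁ g₂ : GL (Fin d) F) (U₁ U₂ W : Submodule F (Fin d → F))
    (hU₁ : MatIrreducibleOn (g₁ : Matrix (Fin d) (Fin d) F) U₁)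
    (hU₁e : Module.finrank F U₁ = e₁)
    (hU₂ : MatIrreducibleOn (g₂ : Matrix (Fin d) (Fin d) F) U₂)
    (hU₂e : Module.finrank F U₂ = e₂)
    (hWbot : W ≠ ⊥) (hWtop : W ≠ ⊤)
    (hW₁ : MatInvariant (g₁ : Matrix (Fin d) (Fin d) F) W)
    (hW₂ : MatInvariant (g₂ : Matrix (Fin d) (Fin d) F) W) :
    (W ⊓ U₁ = ⊥ ∧ W ⊓ U₂ = ⊥ ∧ 1 ≤ Module.finrank F W ∧
        Module.finrank F W ≤ d - max e₁ e₂) ∨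
      (U₁ ⊔ U₂ ≤ W ∧ max e₁ e₂ ≤ Module.finrank F W ∧ Module.finrank F W ≤ d - 1) :=
  cases_for_W_general d e₁ e₂ he₁ he₂ F g₁ g₂ U₁ U₂ W hU₁ hU₁e hU₂ hU₂e hWbot hWtop hW₁ hW₂
end

section
/- Let 1 < d/2 < e_1, e_2 ≤ d, and let (g_1, g_2) ∈ GL(d,q)^2 be a fat(d,q;e_1,e_2)-pair. Then there exists an F_q⟨g_1,g_2⟩-composition factor N of the natural module V = F_q^d with n = dim N ≥ max{e_1,e_2} > d/2, such that the induced elements ḡ_1, ḡ_2 ∈ GL(n,q) form an irreducible fat(n,q;e_1,e_2)-pair, i.e., N is irreducible as F_q⟨ḡ_1,ḡ_2⟩-module and each ḡ_i has an irreducible e_i-dimensional F_q⟨ḡ_i⟩-submodule in N. -/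
/-!
Let `Y` be maximal among the `⟨g₁,g₂⟩`-submodules meeting `U₁` trivially and `X` minimal among
those strictly above `Y`; then `X/Y` is a composition factor. By maximality of `Y`, `X` meets `U₁`,
so `U₁ ≤ X` by irreducibility of `U₁`. As `e₁ + e₂ > d`, the same dichotomy for `U₂` gives
`Y ∩ U₂ = 0` (since `dim Y ≤ d - e₁ < e₂`) and `U₂ ≤ X` (since `dim X ≥ e₁ > d - e₂`). Hence
`(Y ⊕ Uᵢ)/Y ≅ Uᵢ` is an irreducible `eᵢ`-dimensional `⟨ḡᵢ⟩`-submodule of `X/Y`.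
-/

open Module

namespace Sublattice

variable {α : Type*} [Lattice α]

/-- For `L` the subspaces invariant under a group, this says that `Z/Y` is irreducible or zero. -/
def IsSimpleInterval (L : Sublattice α) (Y Z : α) : Prop :=
  ∀ W, Y ≤ W → W ≤ Z → W ∈ L → W = Y ∨ W = Z

variable {L : Sublattice α} {U W : α}

theorem IsSimpleInterval.disjoint_or_le [OrderBot α] (hirr : L.IsSimpleInterval ⊥ U)
    (hU : U ∈ L) (hW : W ∈ L) : Disjoint W U ∨ U ≤ W :=
  (hirr (W ⊓ U) bot_le inf_le_right (L.inf_mem hW hU)).imp disjoint_iff.2 inf_eq_right.1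

theorem IsSimpleInterval.sup_left [OrderBot α] [IsModularLattice α]
    (hirr : L.IsSimpleInterval ⊥ U) (hU : U ∈ L) (Y : α) : L.IsSimpleInterval Y (Y ⊔ U) := by
  intro W hYW hWZ hW
  refine (hirr.disjoint_or_le hU hW).imp (fun hWU => ?_) fun hUW => le_antisymm hWZ (sup_le hYW hUW)
  calc W = (Y ⊔ U) ⊓ W := (inf_eq_right.2 hWZ).symm
    _ = Y ⊔ U ⊓ W := sup_inf_assoc_of_le U hYW
    _ = Y := by rw [hWU.symm.eq_bot, sup_bot_eq]

theorem exists_isSimpleInterval_disjoint [BoundedOrder α] [WellFoundedLT α] [WellFoundedGT α]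
    (hbot : ⊥ ∈ L) (htop : ⊤ ∈ L) (hU : U ≠ ⊥) :
    ∃ Y ∈ L, ∃ X ∈ L, Y < X ∧ Disjoint Y U ∧ ¬Disjoint X U ∧ L.IsSimpleInterval Y X := by
  obtain ⟨Y, ⟨hYL, hYU⟩, hYmax⟩ :=
    exists_maximal_of_wellFoundedGT (fun Y => Y ∈ L ∧ Disjoint Y U) ⟨⊥, hbot, disjoint_bot_left⟩
  have hYtop : Y < ⊤ := lt_top_iff_ne_top.2 fun h => hU (top_disjoint.1 (h ▸ hYU))
  obtain ⟨X, ⟨hXL, hYX⟩, hXmin⟩ :=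
    exists_minimal_of_wellFoundedLT (fun X => X ∈ L ∧ Y < X) ⟨⊤, htop, hYtop⟩
  refine ⟨Y, hYL, X, hXL, hYX, hYU, fun hXU => hYX.not_ge (hYmax ⟨hXL, hXU⟩ hYX.le), ?_⟩
  intro W hYW hWX hW
  rcases hYW.eq_or_lt with hYW | hYW
  · exact Or.inl hYW.symm
  · exact Or.inr (le_antisymm hWX (hXmin ⟨hW, hYW⟩ hWX))

end Sublattice

section Submodule

variable {K V : Type*} [Field K] [AddCommGroup V] [Module K V] [FiniteDimensional K V]
  {L : Sublattice (Submodule K V)} {U W X Y : Submodule K V}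

theorem finrank_sup_eq_add_of_disjoint (h : Disjoint Y U) :
    finrank K ↥(Y ⊔ U) = finrank K Y + finrank K U := by
  rw [← Submodule.finrank_sup_add_finrank_inf_eq, h.eq_bot, finrank_bot, add_zero]

theorem Sublattice.IsSimpleInterval.le_of_finrank_lt_add (hirr : L.IsSimpleInterval ⊥ U)
    (hU : U ∈ L) (hW : W ∈ L) (hdim : finrank K V < finrank K W + finrank K U) : U ≤ W :=
  (hirr.disjoint_or_le hU hW).resolve_left fun hWU =>
    hdim.not_ge (Submodule.finrank_add_finrank_le_of_disjoint hWU)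

theorem Sublattice.IsSimpleInterval.exists_finrank_eq_add (hirr : L.IsSimpleInterval ⊥ U)
    (hU : U ∈ L) (hY : Y ∈ L) (hYU : Disjoint Y U) (hYX : Y ≤ X) (hUX : U ≤ X) :
    ∃ Z, Y ≤ Z ∧ Z ≤ X ∧ Z ∈ L ∧ finrank K Z = finrank K Y + finrank K U ∧
      L.IsSimpleInterval Y Z :=
  ⟨Y ⊔ U, le_sup_left, sup_le hYX hUX, L.sup_mem hY hU, finrank_sup_eq_add_of_disjoint hYU,
    hirr.sup_left hU Y⟩

theorem exists_isSimpleInterval_of_finrank_lt_add {L₁ L₂ : Sublattice (Submodule K V)}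
    {U₁ U₂ : Submodule K V} (hbot : ⊥ ∈ L₁ ⊓ L₂) (htop : ⊤ ∈ L₁ ⊓ L₂)
    (hU₁ : U₁ ∈ L₁) (hirr₁ : L₁.IsSimpleInterval ⊥ U₁) (hU₁ne : U₁ ≠ ⊥)
    (hU₂ : U₂ ∈ L₂) (hirr₂ : L₂.IsSimpleInterval ⊥ U₂)
    (hdim : finrank K V < finrank K U₁ + finrank K U₂) :
    ∃ Y ∈ L₁ ⊓ L₂, ∃ X ∈ L₁ ⊓ L₂, Y < X ∧ (L₁ ⊓ L₂).IsSimpleInterval Y X ∧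
      Disjoint Y U₁ ∧ Disjoint Y U₂ ∧ U₁ ≤ X ∧ U₂ ≤ X := by
  obtain ⟨Y, hY, X, hX, hYX, hYU₁, hXU₁, hYX_simple⟩ :=
    Sublattice.exists_isSimpleInterval_disjoint hbot htop hU₁ne
  rw [Sublattice.mem_inf] at hY hX
  have hU₁X : U₁ ≤ X := (hirr₁.disjoint_or_le hU₁ hX.1).resolve_left hXU₁
  have hYdim := Submodule.finrank_add_finrank_le_of_disjoint hYU₁
  have hYU₂ : Disjoint Y U₂ := (hirr₂.disjoint_or_le hU₂ hY.2).resolve_right fun hU₂Y => by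
    have := Submodule.finrank_mono hU₂Y
    omega
  have hU₂X : U₂ ≤ X := hirr₂.le_of_finrank_lt_add hU₂ hX.2 <| by
    have := Submodule.finrank_mono hU₁X
    omega
  exact ⟨Y, Sublattice.mem_inf.2 hY, X, Sublattice.mem_inf.2 hX, hYX, hYX_simple, hYU₁, hYU₂,
    hU₁X, hU₂X⟩

end Submodule

section Matrix

variable {F : Type} [Field F] {d : ℕ} {g : Matrix (Fin d) (Fin d) F} {U : Submodule F (Fin d → F)}

theorem matInvariant_iff_mem_invtSubmodule :
    MatInvariant g U ↔ U ∈ End.invtSubmodule (Matrix.toLin' g) :=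
  (Module.End.mem_invtSubmodule_iff_map_le _).symm

theorem MatIrreducibleOn.isSimpleInterval (h : MatIrreducibleOn g U) :
    (End.invtSubmodule (Matrix.toLin' g)).IsSimpleInterval ⊥ U :=
  fun W _ hWU hW => h.2.2 W hWU (matInvariant_iff_mem_invtSubmodule.2 hW)

end Matrix

theorem fat_pair_reduction_general (d e₁ e₂ : ℕ)
    (he₁ : d < 2 * e₁) (he₂ : d < 2 * e₂)
    (F : Type) [Field F]
    (g₁ g₂ : GL (Fin d) F) (U₁ U₂ : Submodule F (Fin d → F))
    (hU₁ : MatIrreducibleOn (g₁ : Matrix (Fin d) (Fin d) F) U₁)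
    (hU₁e : Module.finrank F U₁ = e₁)
    (hU₂ : MatIrreducibleOn (g₂ : Matrix (Fin d) (Fin d) F) U₂)
    (hU₂e : Module.finrank F U₂ = e₂) :
    ∃ X Y : Submodule F (Fin d → F),
      Y ≤ X ∧ Y ≠ X ∧
      MatInvariant (g₁ : Matrix (Fin d) (Fin d) F) X ∧
      MatInvariant (g₂ : Matrix (Fin d) (Fin d) F) X ∧
      MatInvariant (g₁ : Matrix (Fin d) (Fin d) F) Y ∧
      MatInvariant (g₂ : Matrix (Fin d) (Fin d) F) Y ∧
      -- `n = dim X/Y ≥ max{e₁,e₂} > d/2`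
      max e₁ e₂ ≤ Module.finrank F X - Module.finrank F Y ∧
      d < 2 * (Module.finrank F X - Module.finrank F Y) ∧
      -- `X/Y` is irreducible as an `F_q⟨ḡ₁,ḡ₂⟩`-module
      (∀ W : Submodule F (Fin d → F), Y ≤ W → W ≤ X →
        MatInvariant (g₁ : Matrix (Fin d) (Fin d) F) W →
        MatInvariant (g₂ : Matrix (Fin d) (Fin d) F) W → W = Y ∨ W = X) ∧
      -- `ḡ₁` has an irreducible `e₁`-dimensional submodule `Z₁/Y` of `X/Y`
      (∃ Z₁ : Submodule F (Fin d → F), Y ≤ Z₁ ∧ Z₁ ≤ X ∧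
        MatInvariant (g₁ : Matrix (Fin d) (Fin d) F) Z₁ ∧
        Module.finrank F Z₁ = Module.finrank F Y + e₁ ∧
        ∀ W : Submodule F (Fin d → F), Y ≤ W → W ≤ Z₁ →
          MatInvariant (g₁ : Matrix (Fin d) (Fin d) F) W → W = Y ∨ W = Z₁) ∧
      -- `ḡ₂` has an irreducible `e₂`-dimensional submodule `Z₂/Y` of `X/Y`
      (∃ Z₂ : Submodule F (Fin d → F), Y ≤ Z₂ ∧ Z₂ ≤ X ∧
        MatInvariant (g₂ : Matrix (Fin d) (Fin d) F) Z₂ ∧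
        Module.finrank F Z₂ = Module.finrank F Y + e₂ ∧
        ∀ W : Submodule F (Fin d → F), Y ≤ W → W ≤ Z₂ →
          MatInvariant (g₂ : Matrix (Fin d) (Fin d) F) W → W = Y ∨ W = Z₂) := by
  have hU₁inv := matInvariant_iff_mem_invtSubmodule.1 hU₁.2.1
  have hU₂inv := matInvariant_iff_mem_invtSubmodule.1 hU₂.2.1
  obtain ⟨Y, hY, X, hX, hYX, hXY, hYU₁, hYU₂, hU₁X, hU₂X⟩ :=
    exists_isSimpleInterval_of_finrank_lt_add (by simp) (by simp) hU₁inv hU₁.isSimpleInterval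
      hU₁.1 hU₂inv hU₂.isSimpleInterval (by rw [finrank_fin_fun]; omega)
  rw [Sublattice.mem_inf] at hY hX
  obtain ⟨Z₁, hYZ₁, hZ₁X, hZ₁, hZ₁dim, hZ₁simple⟩ :=
    hU₁.isSimpleInterval.exists_finrank_eq_add hU₁inv hY.1 hYU₁ hYX.le hU₁X
  obtain ⟨Z₂, hYZ₂, hZ₂X, hZ₂, hZ₂dim, hZ₂simple⟩ :=
    hU₂.isSimpleInterval.exists_finrank_eq_add hU₂inv hY.2 hYU₂ hYX.le hU₂X
  have := Submodule.finrank_mono hZ₁X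
  have := Submodule.finrank_mono hZ₂X
  simp only [matInvariant_iff_mem_invtSubmodule]
  exact ⟨X, Y, hYX.le, hYX.ne, hX.1, hX.2, hY.1, hY.2, by omega, by omega,
    fun W hYW hWX hW₁ hW₂ => hXY W hYW hWX ⟨hW₁, hW₂⟩,
    ⟨Z₁, hYZ₁, hZ₁X, hZ₁, hU₁e ▸ hZ₁dim, hZ₁simple⟩,
    ⟨Z₂, hYZ₂, hZ₂X, hZ₂, hU₂e ▸ hZ₂dim, hZ₂simple⟩⟩

/-- Theorem (reduction): a `fat(d,q;e₁,e₂)`-pair `(g₁,g₂)` admits a composition factor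
`N = X/Y` of the natural module of dimension `n ≥ max{e₁,e₂} > d/2` on which the induced
pair is an irreducible `fat(n,q;e₁,e₂)`-pair.  The quotient `X/Y` is encoded via the
interval of submodules between `Y` and `X`: irreducibility of `X/Y` and the existence of
irreducible `eᵢ`-dimensional `⟨ḡᵢ⟩`-submodules of `X/Y` are stated lattice-theoretically. -/
theorem fat_pair_reduction (q d e₁ e₂ : ℕ) (hq : IsPrimePow q) (hd : 2 < d)
    (he₁ : d < 2 * e₁) (he₁' : e₁ ≤ d) (he₂ : d < 2 * e₂) (he₂' : e₂ ≤ d)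
    (F : Type) [Field F] [Fintype F] [DecidableEq F] (hF : Fintype.card F = q)
    (g₁ g₂ : GL (Fin d) F) (U₁ U₂ : Submodule F (Fin d → F))
    (hU₁ : MatIrreducibleOn (g₁ : Matrix (Fin d) (Fin d) F) U₁)
    (hU₁e : Module.finrank F U₁ = e₁)
    (hU₂ : MatIrreducibleOn (g₂ : Matrix (Fin d) (Fin d) F) U₂)
    (hU₂e : Module.finrank F U₂ = e₂) :
    ∃ X Y : Submodule F (Fin d → F),
      Y ≤ X ∧ Y ≠ X ∧
      MatInvariant (g₁ : Matrix (Fin d) (Fin d) F) X ∧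
      MatInvariant (g₂ : Matrix (Fin d) (Fin d) F) X ∧
      MatInvariant (g₁ : Matrix (Fin d) (Fin d) F) Y ∧
      MatInvariant (g₂ : Matrix (Fin d) (Fin d) F) Y ∧
      -- `n = dim X/Y ≥ max{e₁,e₂} > d/2`
      max e₁ e₂ ≤ Module.finrank F X - Module.finrank F Y ∧
      d < 2 * (Module.finrank F X - Module.finrank F Y) ∧
      -- `X/Y` is irreducible as an `F_q⟨ḡ₁,ḡ₂⟩`-module
      (∀ W : Submodule F (Fin d → F), Y ≤ W → W ≤ X →
        MatInvariant (g₁ : Matrix (Fin d) (Fin d) F) W →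
        MatInvariant (g₂ : Matrix (Fin d) (Fin d) F) W → W = Y ∨ W = X) ∧
      -- `ḡ₁` has an irreducible `e₁`-dimensional submodule `Z₁/Y` of `X/Y`
      (∃ Z₁ : Submodule F (Fin d → F), Y ≤ Z₁ ∧ Z₁ ≤ X ∧
        MatInvariant (g₁ : Matrix (Fin d) (Fin d) F) Z₁ ∧
        Module.finrank F Z₁ = Module.finrank F Y + e₁ ∧
        ∀ W : Submodule F (Fin d → F), Y ≤ W → W ≤ Z₁ →
          MatInvariant (g₁ : Matrix (Fin d) (Fin d) F) W → W = Y ∨ W = Z₁) ∧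
      -- `ḡ₂` has an irreducible `e₂`-dimensional submodule `Z₂/Y` of `X/Y`
      (∃ Z₂ : Submodule F (Fin d → F), Y ≤ Z₂ ∧ Z₂ ≤ X ∧
        MatInvariant (g₂ : Matrix (Fin d) (Fin d) F) Z₂ ∧
        Module.finrank F Z₂ = Module.finrank F Y + e₂ ∧
        ∀ W : Submodule F (Fin d → F), Y ≤ W → W ≤ Z₂ →
          MatInvariant (g₂ : Matrix (Fin d) (Fin d) F) W → W = Y ∨ W = Z₂) :=
  fat_pair_reduction_general d e₁ e₂ he₁ he₂ F g₁ g₂ U₁ U₂ hU₁ hU₁e hU₂ hU₂e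
end
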